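/- For every integer r ≥ 2, define a_r = 2 if r is odd and a_r = 1 if r is even, and let n_r be the absolute value of the numerator (in lowest terms) of B_{2r}/(4r), where B_{2r} is the (2r)-th Bernoulli number. Then the positive integer a_r · 2^(2r−2) · (2^(2r−1) − 1) · n_r is divisible by 7 if and only if r is congruent to 2 modulo 3. -/

import Mathlib

/-!
Since `7` divides neither `a_r` nor a power of `2`, and `2` has order `3` modulo `7`, everything
reduces to `7 ∤ n_r`, i.e. to `‖B_{2r} / (4r)‖₇ ≥ 1`.

If `3 ∣ r`, von Staudt–Clausen gives `‖B_{2r}‖₇ = 7`. Otherwise `6 ∤ m = 2r` and we show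
`‖B_m‖₇ = ‖m‖₇` from Voronoi's congruence
`(a^m - 1) B_m ≡ m a^(m-1) ∑_{j<n} j^(m-1) ⌊a j / n⌋ (mod p^N)`, `n = p^N`, `a = 3`, `p = 7`.
It comes from Faulhaber's formula, which gives `∑_{j<n} j^m ≡ n B_m (mod p^(2N))`, and from
permuting `j ↦ a j mod n` inside that power sum. Modulo `7` the Voronoi sum depends only on
`m mod 6`, so it is a unit because it is one for `m = 2, 4`, where `B_2 = 1/6` and
`B_4 = -1/30` are `7`-adic units; with `N = v₇(m) + 1` the congruence then pins down `‖B_m‖₇`.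
-/

open Finset IsUltrametricDist

lemma padicValNat_le_sub_three {p k : ℕ} (hp5 : 5 ≤ p) (hk : 3 ≤ k) :
    padicValNat p k ≤ k - 3 := by
  have hpow : p ^ padicValNat p k ≤ k := Nat.le_of_dvd (by omega) pow_padicValNat_dvd
  have hbern : 1 + 4 * padicValNat p k ≤ 5 ^ padicValNat p k := by
    have := one_add_mul_le_pow (by norm_num : (-2 : ℤ) ≤ 4) (padicValNat p k)
    norm_num at this
    exact_mod_cast (by linarith : (1 : ℤ) + 4 * padicValNat p k ≤ 5 ^ padicValNat p k)
  have := Nat.pow_le_pow_left hp5 (padicValNat p k)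
  omega

namespace Padic

variable {p : ℕ} [hp : Fact p.Prime]

lemma norm_natCast_eq_zpow {k : ℕ} (hk : k ≠ 0) :
    ‖(k : ℚ_[p])‖ = (p : ℝ) ^ (-(padicValNat p k : ℤ)) := by
  rw [norm_eq_zpow_neg_valuation (Nat.cast_ne_zero.mpr hk), valuation_natCast]

lemma norm_ofNat_eq_one {n : ℕ} [n.AtLeastTwo] (h : p.Coprime n) : ‖(ofNat(n) : ℚ_[p])‖ = 1 :=
  norm_natCast_eq_one_iff.mpr h

lemma norm_intCast_eq_one_iff_ne_zero {z : ℤ} : ‖(z : ℚ_[p])‖ = 1 ↔ (z : ZMod p) ≠ 0 := by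
  rw [ne_eq, ZMod.intCast_zmod_eq_zero_iff_dvd, ← norm_intCast_lt_one_iff]
  exact ⟨fun h => h.not_lt, fun h => (norm_int_le_one z).eq_of_not_lt h⟩

lemma norm_inv_natCast_of_prime_of_ne {q : ℕ} (hq : q.Prime) (hqp : q ≠ p) :
    ‖(q : ℚ_[p])⁻¹‖ = 1 := by
  rw [norm_inv, norm_natCast_eq_one_iff.mpr ((Nat.coprime_primes hp.out hq).mpr hqp.symm),
    inv_one]

lemma norm_inv_natCast_of_prime_le {q : ℕ} (hq : q.Prime) : ‖(q : ℚ_[p])⁻¹‖ ≤ p := by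
  rcases eq_or_ne q p with rfl | hqp
  · rw [norm_inv, norm_p, inv_inv]
  · rw [norm_inv_natCast_of_prime_of_ne hq hqp]
    exact_mod_cast hp.out.one_le

lemma norm_p_pow_mul_div_natCast_le (hp5 : 5 ≤ p) {k N : ℕ} (hk : 3 ≤ k) (hN : 1 ≤ N) :
    ‖(p : ℚ_[p]) ^ (N * k) / k‖ ≤ (p : ℝ) ^ (-(2 * N + 1 : ℕ) : ℤ) := by
  rw [norm_div, norm_p_pow, norm_natCast_eq_zpow (by omega),
    ← zpow_sub₀ (by exact_mod_cast hp.out.ne_zero)]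
  refine zpow_le_zpow_right₀ (by exact_mod_cast hp.out.one_le) ?_
  have hv := padicValNat_le_sub_three hp5 hk
  obtain ⟨k', rfl⟩ : ∃ k', k = k' + 3 := ⟨k - 3, by omega⟩
  have : 2 * N + 1 + k' ≤ N * (k' + 3) := by nlinarith
  omega

lemma not_dvd_num_of_one_le_norm {q : ℚ} (hq : 1 ≤ ‖(q : ℚ_[p])‖) : ¬ p ∣ q.num.natAbs := by
  intro hdvd
  have hden : ‖(q.den : ℚ_[p])‖ = 1 :=
    norm_natCast_eq_one_iff.mpr (Nat.Coprime.coprime_dvd_left hdvd q.reduced)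
  have hnum : ‖(q.num : ℚ_[p])‖ < 1 := norm_intCast_lt_one_iff.mpr (Int.natCast_dvd.mpr hdvd)
  rw [Rat.cast_def, norm_div, hden, div_one] at hq
  exact hnum.not_ge hq

lemma norm_bernoulli_two_mul_le (k : ℕ) : ‖(bernoulli (2 * k) : ℚ_[p])‖ ≤ p := by
  obtain ⟨z, hz⟩ := Bernoulli.vonStaudt_clausen k
  rw [eq_sub_of_add_eq hz.symm]
  push_cast
  rw [sub_eq_add_neg]
  refine (norm_add_le_max _ _).trans (max_le ?_ ?_)
  · exact (norm_int_le_one z).trans (by exact_mod_cast hp.out.one_le)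
  · rw [norm_neg]
    refine norm_sum_le_of_forall_le_of_nonneg (by positivity) fun q hq => ?_
    simpa using norm_inv_natCast_of_prime_le (mem_filter.mp hq).2.1

lemma norm_bernoulli_two_mul_of_sub_one_dvd {k : ℕ} (hk : k ≠ 0) (hpk : p - 1 ∣ 2 * k) :
    ‖(bernoulli (2 * k) : ℚ_[p])‖ = p := by
  obtain ⟨z, hz⟩ := Bernoulli.vonStaudt_clausen k
  have hmem : p ∈ (range (2 * k + 2)).filter (fun q => q.Prime ∧ q - 1 ∣ 2 * k) := by
    have := Nat.le_of_dvd (by omega) hpk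
    simp only [mem_filter, mem_range]
    exact ⟨by omega, hp.out, hpk⟩
  rw [← add_sum_erase _ _ hmem] at hz
  set rest := ∑ q ∈ ((range (2 * k + 2)).filter (fun q => q.Prime ∧ q - 1 ∣ 2 * k)).erase p,
    (1 : ℚ) / q
  have hB : (bernoulli (2 * k) : ℚ_[p]) = ((z : ℚ_[p]) - (rest : ℚ_[p])) + -(p : ℚ_[p])⁻¹ := by
    rw [eq_sub_of_add_eq hz.symm]
    push_cast
    ring
  have hrest : ‖(rest : ℚ_[p])‖ ≤ 1 := by
    simp only [rest, Rat.cast_sum]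
    refine norm_sum_le_of_forall_le_of_nonneg zero_le_one fun q hq => ?_
    obtain ⟨hqp, hq⟩ := mem_erase.mp hq
    simpa using (norm_inv_natCast_of_prime_of_ne (mem_filter.mp hq).2.1 hqp).le
  have hlt : ‖(z : ℚ_[p]) - rest‖ < ‖-(p : ℚ_[p])⁻¹‖ := by
    rw [norm_neg, norm_inv, norm_p, inv_inv]
    refine lt_of_le_of_lt ?_ (Nat.one_lt_cast.mpr hp.out.one_lt)
    rw [sub_eq_add_neg]
    exact (norm_add_le_max _ _).trans (max_le (norm_int_le_one z) (by rwa [norm_neg]))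
  rw [hB, norm_add_eq_max_of_norm_ne_norm hlt.ne, max_eq_right hlt.le, norm_neg, norm_inv,
    norm_p, inv_inv]

end Padic

open Padic

lemma sum_range_pow_eq_sum_choose_div (n m : ℕ) :
    ∑ k ∈ range n, (k : ℚ) ^ m =
      ∑ i ∈ range (m + 1), bernoulli i * m.choose i * (n : ℚ) ^ (m + 1 - i) / (m + 1 - i : ℕ) := by
  rw [sum_range_pow]
  refine sum_congr rfl fun i hi => ?_
  have hi : i ≤ m := Nat.lt_succ_iff.mp (mem_range.mp hi)
  have hc : (m.choose i : ℚ) * (m + 1) = (m + 1).choose i * (m + 1 - i : ℕ) := by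
    exact_mod_cast Nat.choose_mul_succ_eq m i
  have hk : ((m + 1 - i : ℕ) : ℚ) ≠ 0 := Nat.cast_ne_zero.mpr (by omega)
  rw [div_eq_div_iff (by positivity) hk]
  linear_combination bernoulli i * (n : ℚ) ^ (m + 1 - i) * hc.symm

lemma sum_range_comp_mul_mod {M : Type*} [AddCommMonoid M] {a n : ℕ} (ha : a.Coprime n)
    (f : ℕ → M) : ∑ j ∈ range n, f (a * j % n) = ∑ j ∈ range n, f j := by
  rcases Nat.eq_zero_or_pos n with rfl | hn
  · simp
  have hmaps : Set.MapsTo (fun j => a * j % n) (range n) (range n) :=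
    fun j _ => mem_range.mpr (Nat.mod_lt _ hn)
  have hinj : Set.InjOn (fun j => a * j % n) (range n) := fun x hx y hy hxy =>
    (Nat.ModEq.cancel_left_of_coprime ha.symm hxy).eq_of_lt_of_lt (mem_range.mp hx)
      (mem_range.mp hy)
  exact sum_nbij _ hmaps hinj (surjOn_of_injOn_of_card_le _ hmaps hinj le_rfl) fun _ _ => rfl

def voronoiSum (a n s : ℕ) : ℤ := ∑ j ∈ range n, (j : ℤ) ^ s * (a * j / n : ℕ)

theorem pow_sub_one_mul_sum_range_pow_modEq {a n : ℕ} (ha : a.Coprime n) (s : ℕ) :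
    ((a : ℤ) ^ (s + 1) - 1) * ∑ j ∈ range n, (j : ℤ) ^ (s + 1) ≡
      (s + 1) * a ^ s * n * voronoiSum a n s [ZMOD n ^ 2] := by
  have hterm : ∀ j : ℕ, ((a * j % n : ℕ) : ℤ) ^ (s + 1) ≡
      (a : ℤ) ^ (s + 1) * j ^ (s + 1) - (s + 1) * a ^ s * n * (j ^ s * (a * j / n : ℕ))
        [ZMOD n ^ 2] := by
    intro j
    set q : ℤ := ((a * j / n : ℕ) : ℤ)
    have hmod : ((a * j % n : ℕ) : ℤ) = a * j + -(n * q) := by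
      have := congrArg (Nat.cast : ℕ → ℤ) (Nat.mod_add_div (a * j) n)
      simp only [Nat.cast_add, Nat.cast_mul] at this
      linear_combination this
    obtain ⟨c, hc⟩ := sq_dvd_add_pow_sub_sub (-(n * q)) ((a : ℤ) * j) (s + 1)
    rw [Int.modEq_iff_dvd, hmod]
    exact ⟨-(q ^ 2 * c), by push_cast at hc; linear_combination -hc⟩
  have hsum := (Int.ModEq.sum fun j (_ : j ∈ range n) => hterm j).symm
  rw [sum_range_comp_mul_mod ha fun b => ((b : ℕ) : ℤ) ^ (s + 1)] at hsum
  rw [Int.modEq_iff_dvd] at hsum ⊢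
  convert hsum using 1
  simp only [voronoiSum, sum_sub_distrib, ← mul_sum]
  ring

variable {p : ℕ} [hp : Fact p.Prime]

lemma norm_bernoulli_mul_choose_mul_pow_div_le (hp5 : 5 ≤ p) {m N i : ℕ} (hm : Even m)
    (hi : i < m) (hN : 1 ≤ N) :
    ‖((bernoulli i * m.choose i * ((p ^ N : ℕ) : ℚ) ^ (m + 1 - i) / (m + 1 - i : ℕ) : ℚ) :
      ℚ_[p])‖ ≤ (p : ℝ) ^ (-(2 * N : ℕ) : ℤ) := by
  rcases Nat.even_or_odd i with ⟨j, rfl⟩ | hodd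
  · set k := m + 1 - (j + j)
    have hk3 : 3 ≤ k := by obtain ⟨t, rfl⟩ := hm; omega
    have hterm : ((bernoulli (j + j) * m.choose (j + j) * ((p ^ N : ℕ) : ℚ) ^ k / (k : ℕ) : ℚ) :
        ℚ_[p]) = (bernoulli (2 * j) : ℚ_[p]) * (m.choose (j + j) : ℚ_[p]) *
          ((p : ℚ_[p]) ^ (N * k) / k) := by
      rw [← two_mul, pow_mul]
      push_cast
      ring
    rw [hterm, norm_mul, norm_mul]
    calc _ ≤ (p : ℝ) * 1 * (p : ℝ) ^ (-(2 * N + 1 : ℕ) : ℤ) := by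
          gcongr
          · exact norm_bernoulli_two_mul_le j
          · exact norm_natCast_le_one ℚ_[p] _
          · exact norm_p_pow_mul_div_natCast_le hp5 hk3 hN
      _ = (p : ℝ) ^ (-(2 * N : ℕ) : ℤ) := by
          rw [mul_one, ← zpow_one_add₀ (by exact_mod_cast hp.out.ne_zero)]
          push_cast
          ring_nf
  rcases eq_or_ne i 1 with rfl | hi1
  · have hterm : ((bernoulli 1 * m.choose 1 * ((p ^ N : ℕ) : ℚ) ^ (m + 1 - 1) /
        (m + 1 - 1 : ℕ) : ℚ) : ℚ_[p]) = -(p : ℚ_[p]) ^ (N * m) / 2 := by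
      have hm0 : (m : ℚ_[p]) ≠ 0 := Nat.cast_ne_zero.mpr (by omega)
      rw [Nat.add_sub_cancel, Nat.choose_one_right, bernoulli_one, pow_mul]
      push_cast
      field_simp
    rw [hterm, norm_div, norm_neg, norm_ofNat_eq_one ((Nat.coprime_primes hp.out Nat.prime_two).mpr
      (by omega)), div_one, norm_p_pow]
    exact zpow_le_zpow_right₀ (by exact_mod_cast hp.out.one_le) (by push_cast; nlinarith)
  · have hB : bernoulli i = 0 := bernoulli_eq_zero_of_odd hodd (by obtain ⟨t, rfl⟩ := hodd; omega)
    simp only [hB, Rat.cast_zero, zero_mul, zero_div, norm_zero]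
    positivity

lemma norm_sum_range_pow_sub_bernoulli_le (hp5 : 5 ≤ p) {m N : ℕ} (hm : Even m) (hN : 1 ≤ N) :
    ‖∑ k ∈ range (p ^ N), (k : ℚ_[p]) ^ m - (p : ℚ_[p]) ^ N * bernoulli m‖ ≤
      (p : ℝ) ^ (-(2 * N : ℕ) : ℤ) := by
  have hfaulhaber : ∑ k ∈ range (p ^ N), (k : ℚ) ^ m - ((p ^ N : ℕ) : ℚ) * bernoulli m =
      ∑ i ∈ range m,
        bernoulli i * m.choose i * ((p ^ N : ℕ) : ℚ) ^ (m + 1 - i) / (m + 1 - i : ℕ) := by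
    rw [sum_range_pow_eq_sum_choose_div, sum_range_succ, Nat.add_sub_cancel_left]
    simp only [Nat.choose_self, Nat.cast_one, mul_one, pow_one, div_one]
    ring
  have hcast : ∑ k ∈ range (p ^ N), (k : ℚ_[p]) ^ m - (p : ℚ_[p]) ^ N * bernoulli m =
      ((∑ k ∈ range (p ^ N), (k : ℚ) ^ m - ((p ^ N : ℕ) : ℚ) * bernoulli m : ℚ) : ℚ_[p]) := by
    push_cast
    rfl
  rw [hcast, hfaulhaber, Rat.cast_sum]
  exact norm_sum_le_of_forall_le_of_nonneg (by positivity) fun i hi =>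
    norm_bernoulli_mul_choose_mul_pow_div_le hp5 hm (mem_range.mp hi) hN

theorem norm_pow_sub_one_mul_bernoulli_sub_le (hp5 : 5 ≤ p) {a : ℕ} (ha : a.Coprime p)
    {s N : ℕ} (hs : Odd s) (hN : 1 ≤ N) :
    ‖((a : ℚ_[p]) ^ (s + 1) - 1) * bernoulli (s + 1) - (s + 1) * a ^ s * voronoiSum a (p ^ N) s‖ ≤
      (p : ℝ) ^ (-N : ℤ) := by
  set S : ℚ_[p] := ∑ k ∈ range (p ^ N), (k : ℚ_[p]) ^ (s + 1)
  set c : ℚ_[p] := (a : ℚ_[p]) ^ (s + 1) - 1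
  set W : ℚ_[p] := ((voronoiSum a (p ^ N) s : ℤ) : ℚ_[p])
  have hbound : (p : ℝ) ^ (-(2 * N : ℕ) : ℤ) = (p : ℝ) ^ (-N : ℤ) * (p : ℝ) ^ (-N : ℤ) := by
    rw [← zpow_add₀ (by exact_mod_cast hp.out.ne_zero)]
    push_cast
    ring_nf
  have hc : ‖c‖ ≤ 1 := by
    simpa [c] using norm_int_le_one (p := p) ((a : ℤ) ^ (s + 1) - 1)
  have hfaulhaber : ‖(p : ℚ_[p]) ^ N * bernoulli (s + 1) - S‖ ≤
      (p : ℝ) ^ (-(2 * N : ℕ) : ℤ) := by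
    rw [norm_sub_rev]
    exact norm_sum_range_pow_sub_bernoulli_le hp5 hs.add_one hN
  have hvoronoi : ‖c * S - (s + 1) * a ^ s * p ^ N * W‖ ≤ (p : ℝ) ^ (-(2 * N : ℕ) : ℤ) := by
    have h := (pow_sub_one_mul_sum_range_pow_modEq (ha.pow_right N) s).symm.dvd
    rw [Nat.cast_pow, ← pow_mul, mul_comm N 2] at h
    have := (norm_int_le_pow_iff_dvd _ (2 * N)).mpr (by exact_mod_cast h)
    push_cast at this
    simpa [c, S, W] using this
  have hsplit : (p : ℚ_[p]) ^ N * (c * bernoulli (s + 1) - (s + 1) * a ^ s * W) =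
      c * ((p : ℚ_[p]) ^ N * bernoulli (s + 1) - S) + (c * S - (s + 1) * a ^ s * p ^ N * W) := by
    ring
  have hmul : (p : ℝ) ^ (-N : ℤ) * ‖c * bernoulli (s + 1) - (s + 1) * a ^ s * W‖ ≤
      (p : ℝ) ^ (-N : ℤ) * (p : ℝ) ^ (-N : ℤ) := by
    rw [← hbound, ← norm_p_pow, ← norm_mul, hsplit]
    refine (norm_add_le_max _ _).trans (max_le ?_ hvoronoi)
    rw [norm_mul]
    exact (mul_le_of_le_one_left (norm_nonneg _) hc).trans hfaulhaber
  exact le_of_mul_le_mul_left hmul (by positivity)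

lemma ZMod.pow_eq_pow_of_modEq_sub_one (x : ZMod p) {s s' : ℕ} (hs : s ≠ 0) (hs' : s' ≠ 0)
    (h : s ≡ s' [MOD p - 1]) : x ^ s = x ^ s' := by
  rcases eq_or_ne x 0 with rfl | hx
  · rw [zero_pow hs, zero_pow hs']
  · exact pow_eq_pow_of_modEq h (ZMod.pow_card_sub_one_eq_one hx)

lemma voronoiSum_cast_eq_of_modEq (a n : ℕ) {s s' : ℕ} (hs : s ≠ 0) (hs' : s' ≠ 0)
    (h : s ≡ s' [MOD p - 1]) : (voronoiSum a n s : ZMod p) = voronoiSum a n s' := by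
  simp only [voronoiSum, Int.cast_sum, Int.cast_mul, Int.cast_pow, Int.cast_natCast]
  exact sum_congr rfl fun j _ => by rw [ZMod.pow_eq_pow_of_modEq_sub_one _ hs hs' h]

instance fact_prime_seven : Fact (Nat.Prime 7) := ⟨by norm_num⟩

lemma norm_three_pow_sub_one_seven {m : ℕ} (hm : m % 6 = 2 ∨ m % 6 = 4) :
    ‖(3 : ℚ_[7]) ^ m - 1‖ = 1 := by
  have hpow : (3 : ZMod 7) ^ m = 3 ^ (m % 6) :=
    ZMod.pow_eq_pow_of_modEq_sub_one _ (by omega) (by omega) (Nat.mod_modEq m 6).symm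
  have hne : (((3 : ℤ) ^ m - 1 : ℤ) : ZMod 7) ≠ 0 := by
    push_cast
    rw [hpow]
    rcases hm with h | h <;> rw [h] <;> decide
  exact_mod_cast norm_intCast_eq_one_iff_ne_zero.mpr hne

lemma norm_voronoiSum_three_seven_of_eq {s N : ℕ} (hs : s = 1 ∨ s = 3) (hN : 1 ≤ N) :
    ‖(voronoiSum 3 (7 ^ N) s : ℚ_[7])‖ = 1 := by
  have hodd : Odd s := by rcases hs with rfl | rfl <;> decide
  have hcong :=
    norm_pow_sub_one_mul_bernoulli_sub_le (p := 7) (by norm_num) (a := 3) (by norm_num) hodd hN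
  have hB : ‖((3 : ℚ_[7]) ^ (s + 1) - 1) * bernoulli (s + 1)‖ = 1 := by
    rcases hs with rfl | rfl
    · rw [bernoulli_two]
      norm_num
      rw [norm_ofNat_eq_one (by norm_num), norm_ofNat_eq_one (by norm_num), div_one]
    · rw [bernoulli_eq_bernoulli'_of_ne_one (by norm_num), bernoulli'_four]
      norm_num
      rw [norm_ofNat_eq_one (by norm_num), norm_ofNat_eq_one (by norm_num), div_one]
  have hlt : ‖((3 : ℚ_[7]) ^ (s + 1) - 1) * bernoulli (s + 1) -
      (s + 1) * 3 ^ s * voronoiSum 3 (7 ^ N) s‖ < 1 :=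
    hcong.trans_lt (zpow_lt_one_of_neg₀ (by norm_num) (by omega))
  have hW := norm_eq_of_norm_sub_lt_left (hlt.trans_eq hB.symm)
  have hc : ‖((s : ℚ_[7]) + 1) * 3 ^ s‖ = 1 := by
    rcases hs with rfl | rfl <;> norm_num <;> exact norm_ofNat_eq_one (by norm_num)
  rwa [hB, norm_mul, hc, one_mul, eq_comm] at hW

lemma norm_voronoiSum_three_seven {s N : ℕ} (hs : s % 6 = 1 ∨ s % 6 = 3) (hN : 1 ≤ N) :
    ‖(voronoiSum 3 (7 ^ N) s : ℚ_[7])‖ = 1 := by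
  obtain ⟨s₀, hs₀, hmod⟩ : ∃ s₀, (s₀ = 1 ∨ s₀ = 3) ∧ s ≡ s₀ [MOD 6] := by
    rcases hs with h | h
    exacts [⟨1, .inl rfl, h⟩, ⟨3, .inr rfl, h⟩]
  rw [norm_intCast_eq_one_iff_ne_zero, voronoiSum_cast_eq_of_modEq _ _ (by omega) (by omega) hmod,
    ← norm_intCast_eq_one_iff_ne_zero]
  exact norm_voronoiSum_three_seven_of_eq hs₀ hN

theorem norm_bernoulli_seven_eq_norm_natCast {m : ℕ} (hm : Even m) (hm0 : m ≠ 0) (h6 : ¬ 6 ∣ m) :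
    ‖(bernoulli m : ℚ_[7])‖ = ‖(m : ℚ_[7])‖ := by
  obtain ⟨s, rfl⟩ : ∃ s, m = s + 1 := ⟨m - 1, by omega⟩
  have hs : Odd s := Nat.not_even_iff_odd.mp (Nat.even_add_one.mp hm)
  have hmod : s % 6 = 1 ∨ s % 6 = 3 := by obtain ⟨t, ht⟩ := hs; omega
  set v := padicValNat 7 (s + 1)
  have hcong := norm_pow_sub_one_mul_bernoulli_sub_le (p := 7) (by norm_num) (a := 3)
    (by norm_num) hs (N := v + 1) (by omega)
  have hrhs : ‖((s : ℚ_[7]) + 1) * 3 ^ s * voronoiSum 3 (7 ^ (v + 1)) s‖ =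
      ‖((s + 1 : ℕ) : ℚ_[7])‖ := by
    rw [norm_mul, norm_mul, norm_voronoiSum_three_seven hmod (by omega), norm_pow,
      norm_ofNat_eq_one (by norm_num), one_pow, mul_one, mul_one]
    push_cast
    rfl
  have hlt : ‖((3 : ℚ_[7]) ^ (s + 1) - 1) * bernoulli (s + 1) -
      (s + 1) * 3 ^ s * voronoiSum 3 (7 ^ (v + 1)) s‖ <
        ‖((s : ℚ_[7]) + 1) * 3 ^ s * voronoiSum 3 (7 ^ (v + 1)) s‖ := by
    refine hcong.trans_lt ?_
    rw [hrhs, norm_natCast_eq_zpow hm0]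
    exact zpow_lt_zpow_right₀ (by norm_num) (by omega)
  have hlhs := norm_eq_of_norm_sub_lt_right hlt
  rwa [hrhs, norm_mul, norm_three_pow_sub_one_seven (by omega), one_mul] at hlhs

theorem one_le_norm_bernoulli_two_mul_div {r : ℕ} (hr : r ≠ 0) :
    1 ≤ ‖((bernoulli (2 * r) / (4 * r) : ℚ) : ℚ_[7])‖ := by
  have hcast : ((bernoulli (2 * r) / (4 * r) : ℚ) : ℚ_[7]) =
      (bernoulli (2 * r) : ℚ_[7]) / ((4 * r : ℕ) : ℚ_[7]) := by
    push_cast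
    rfl
  have hpos : 0 < ‖((4 * r : ℕ) : ℚ_[7])‖ :=
    norm_pos_iff.mpr (Nat.cast_ne_zero.mpr (by omega))
  rw [hcast, norm_div, one_le_div hpos]
  by_cases h3 : 3 ∣ r
  · rw [norm_bernoulli_two_mul_of_sub_one_dvd hr (by omega)]
    exact (norm_natCast_le_one ℚ_[7] _).trans (by norm_num)
  · rw [norm_bernoulli_seven_eq_norm_natCast (even_two_mul r) (by omega) (by omega)]
    push_cast
    rw [norm_mul, norm_mul, norm_ofNat_eq_one (by norm_num), norm_ofNat_eq_one (by norm_num)]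

lemma seven_dvd_two_pow_sub_one_iff (n : ℕ) : 7 ∣ 2 ^ n - 1 ↔ 3 ∣ n := by
  have hmod : 2 ^ n % 7 = 2 ^ (n % 3) % 7 := by
    conv_lhs => rw [← Nat.div_add_mod n 3, pow_add, pow_mul, Nat.mul_mod, Nat.pow_mod]
    norm_num
  have hpos := Nat.one_le_two_pow (n := n)
  have hlt : n % 3 < 3 := Nat.mod_lt _ (by norm_num)
  interval_cases hk : n % 3 <;>
    simp only [pow_zero, pow_one, Nat.reducePow, Nat.reduceMod] at hmod <;> omega

/-- Lemma 4.2 of the paper: `7` divides `|bP_{4r}|` iff `3 ∣ r − 2`.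
For every integer `r ≥ 2`, with `a_r = 2` if `r` is odd and `a_r = 1` if `r` is even, and
`n_r` the absolute value of the numerator in lowest terms of `B_{2r}/(4r)` (where `B_{2r}`
is the `(2r)`-th Bernoulli number), the positive integer
`a_r · 2^(2r−2) · (2^(2r−1) − 1) · n_r` is divisible by `7` if and only if
`r ≡ 2 (mod 3)`. -/
theorem stmt_10 (r : ℕ) (hr : 2 ≤ r) :
    (7 ∣ (if Odd r then 2 else 1) * 2 ^ (2 * r - 2) * (2 ^ (2 * r - 1) - 1) *
        (bernoulli (2 * r) / (4 * r : ℚ)).num.natAbs) ↔ r % 3 = 2 := by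
  have h7 : Nat.Prime 7 := by norm_num
  have ha : ¬ 7 ∣ (if Odd r then 2 else 1) := by split_ifs <;> norm_num
  have htwo : ¬ 7 ∣ 2 ^ (2 * r - 2) := fun h => by simpa using h7.dvd_of_dvd_pow h
  have hnum := not_dvd_num_of_one_le_norm (one_le_norm_bernoulli_two_mul_div (by omega : r ≠ 0))
  simp only [h7.dvd_mul, ha, htwo, hnum, false_or, or_false, seven_dvd_two_pow_sub_one_iff]
  omega
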